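/- arXiv:1209.0345 — 4 statements merged into one kernel-verified Lean document; each statement's English description precedes it below -/
import Mathlib

section
/- Define extended observability matrices for {(A_q, C_q)}_{q=1}^{Q} by O_0 = [C_1; …; C_Q] (stacked) and O_{i+1} = [O_i; O_i A_1; …; O_i A_Q]. Then ker O_{n-1} = ⋂ { ker (C_{q_k} A_{q_{k-1}} ⋯ A_{q_1}) : k ≥ 1, q_1,…,q_k ∈ {1,…,Q} }, where A_q ∈ ℝ^{n×n} and C_q ∈ ℝ^{p×n}. -/
/- Stripping the first letter `a` of a word of length `k + 2` shows that `x` is killed by all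
words of length `k + 2` iff every `A_a x` is killed by all words of length `k + 1`; this is the
recursion defining `obsKer`, so `ker O_i` is the set of `x` killed by all words of length
`≤ i + 1`. The chain `ker O_i` is decreasing, and once two consecutive terms agree it is
constant, since each term depends only on the previous one. A strictly decreasing chain of
subspaces of `ℝⁿ` starting below `⊤` has at most `n - 1` steps, while `ker O_0 = ⊤` forces
`ker O_1 = ⊤`; so the chain is constant from `n - 1` on. -/

open Matrix

/-- Product of `A`-matrices along a word: for `q : Fin k → Fin Qn`,
`wordProd A q = A_{q (k-1)} ⋯ A_{q 0}` (identity for the empty word). -/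
def wordProd {Qn n : ℕ} (A : Fin Qn → Matrix (Fin n) (Fin n) ℝ) :
    {k : ℕ} → (Fin k → Fin Qn) → Matrix (Fin n) (Fin n) ℝ
  | 0, _ => 1
  | k+1, q => A (q (Fin.last k)) * wordProd A (Fin.init q)

/-- Kernel of the `i`-th extended observability matrix
`O_0 = [C_1; …; C_Q]`, `O_{i+1} = [O_i; O_i A_1; …; O_i A_Q]`. -/
def obsKer {Qn n pd : ℕ} (A : Fin Qn → Matrix (Fin n) (Fin n) ℝ)
    (C : Fin Qn → Matrix (Fin pd) (Fin n) ℝ) : ℕ → Submodule ℝ (Fin n → ℝ)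
  | 0 => ⨅ q : Fin Qn, LinearMap.ker (Matrix.mulVecLin (C q))
  | i+1 => obsKer A C i ⊓
      ⨅ q : Fin Qn, Submodule.comap (Matrix.mulVecLin (A q)) (obsKer A C i)

theorem Submodule.exists_le_finrank_succ_eq_of_antitone {K V : Type*} [DivisionRing K]
    [AddCommGroup V] [Module K V] [FiniteDimensional K V] {U : ℕ → Submodule K V}
    (hU : Antitone U) : ∃ j ≤ Module.finrank K (U 0), U (j + 1) = U j := by
  by_contra! hne
  have hdrop : ∀ j ≤ Module.finrank K (U 0) + 1,
      Module.finrank K (U j) + j ≤ Module.finrank K (U 0) := by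
    intro j
    induction j with
    | zero => simp
    | succ j ih =>
      intro hj
      have hlt : U (j + 1) < U j := lt_of_le_of_ne (hU j.le_succ) (hne j (by omega))
      have := Submodule.finrank_lt_finrank_of_lt hlt
      have := ih (by omega)
      omega
  have := hdrop _ le_rfl
  omega

theorem Fin.init_cons_succ {α : Type*} {k : ℕ} (a : α) (q : Fin (k + 1) → α) :
    Fin.init (Fin.cons a q : Fin (k + 2) → α) = Fin.cons a (Fin.init q) := by
  funext i
  cases i using Fin.cases <;> simp [Fin.init]

section Observability

variable {Qn n pd : ℕ} (A : Fin Qn → Matrix (Fin n) (Fin n) ℝ)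
  (C : Fin Qn → Matrix (Fin pd) (Fin n) ℝ)

theorem wordProd_cons : ∀ {k : ℕ} (a : Fin Qn) (q : Fin k → Fin Qn),
    wordProd A (Fin.cons a q : Fin (k + 1) → Fin Qn) = wordProd A q * A a
  | 0, a, q => by simp [wordProd]
  | k + 1, a, q => by
    rw [wordProd, Fin.cons_last, Fin.init_cons_succ, wordProd_cons, wordProd, Matrix.mul_assoc]

def wordKer (k : ℕ) : Submodule ℝ (Fin n → ℝ) :=
  ⨅ q : Fin (k + 1) → Fin Qn,
    LinearMap.ker (Matrix.mulVecLin (C (q (Fin.last k)) * wordProd A (Fin.init q)))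

theorem wordKer_zero : wordKer A C 0 = obsKer A C 0 := by
  refine le_antisymm (le_iInf fun a => iInf_le_of_le (fun _ => a) ?_)
    (le_iInf fun q => iInf_le_of_le (q 0) ?_) <;> simp [wordProd, Fin.last]

theorem mem_wordKer_succ {k : ℕ} {x : Fin n → ℝ} :
    x ∈ wordKer A C (k + 1) ↔ ∀ a, A a *ᵥ x ∈ wordKer A C k := by
  simp only [wordKer, Submodule.mem_iInf, LinearMap.mem_ker, mulVecLin_apply]
  rw [Fin.forall_fin_succ_pi]
  simp only [Fin.cons_last, Fin.init_cons_succ, wordProd_cons, mulVec_mulVec, Matrix.mul_assoc]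

theorem obsKer_succ (i : ℕ) : obsKer A C (i + 1) =
    obsKer A C i ⊓ ⨅ a, Submodule.comap (Matrix.mulVecLin (A a)) (obsKer A C i) :=
  rfl

theorem mem_obsKer_succ {i : ℕ} {x : Fin n → ℝ} :
    x ∈ obsKer A C (i + 1) ↔ x ∈ obsKer A C i ∧ ∀ a, A a *ᵥ x ∈ obsKer A C i := by
  simp only [obsKer_succ, Submodule.mem_inf, Submodule.mem_iInf, Submodule.mem_comap,
    mulVecLin_apply]

theorem mem_obsKer_iff {i : ℕ} {x : Fin n → ℝ} :
    x ∈ obsKer A C i ↔ ∀ k ≤ i, x ∈ wordKer A C k := by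
  induction i generalizing x with
  | zero => simp [← wordKer_zero]
  | succ i ih =>
    simp only [mem_obsKer_succ, ih]
    constructor
    · rintro ⟨hx, hAx⟩ (_ | k) hk
      · exact hx 0 (Nat.zero_le i)
      · exact (mem_wordKer_succ A C).2 fun a => hAx a k (by omega)
    · intro h
      exact ⟨fun k hk => h k (by omega),
        fun a k hk => (mem_wordKer_succ A C).1 (h (k + 1) (by omega)) a⟩

theorem obsKer_antitone : Antitone (obsKer A C) :=
  antitone_nat_of_succ_le fun _ => inf_le_left

theorem obsKer_add_eq_of_succ_eq {j : ℕ} (h : obsKer A C (j + 1) = obsKer A C j) (m : ℕ) :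
    obsKer A C (j + m) = obsKer A C j := by
  induction m with
  | zero => rfl
  | succ m ih => rw [← add_assoc, obsKer_succ, ih, ← obsKer_succ, h]

theorem exists_le_pred_obsKer_succ_eq :
    ∃ j ≤ n - 1, obsKer A C (j + 1) = obsKer A C j := by
  by_cases htop : obsKer A C 0 = ⊤
  · exact ⟨0, Nat.zero_le _, by simp [obsKer_succ, htop]⟩
  obtain ⟨j, hj, hstab⟩ :=
    Submodule.exists_le_finrank_succ_eq_of_antitone (obsKer_antitone A C)
  have := Submodule.finrank_lt htop
  simp only [Module.finrank_fin_fun] at this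
  exact ⟨j, by omega, hstab⟩

theorem obsKer_eq_of_pred_le {m : ℕ} (hm : n - 1 ≤ m) : obsKer A C m = obsKer A C (n - 1) := by
  obtain ⟨j, hj, hstab⟩ := exists_le_pred_obsKer_succ_eq A C
  rw [← Nat.add_sub_of_le (hj.trans hm), ← Nat.add_sub_of_le hj,
    obsKer_add_eq_of_succ_eq A C hstab, obsKer_add_eq_of_succ_eq A C hstab]

end Observability

/-- `ker O_{n-1} = ⋂ { ker (C_{q_k} A_{q_{k-1}} ⋯ A_{q_1}) : k ≥ 1 }` (words of length
`k+1 ≥ 1` are encoded as `q : Fin (k+1) → Fin Qn`, the last letter indexing `C`). -/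
theorem stmt12 {Qn n pd : ℕ}
    (A : Fin Qn → Matrix (Fin n) (Fin n) ℝ)
    (C : Fin Qn → Matrix (Fin pd) (Fin n) ℝ) :
    obsKer A C (n-1) =
      ⨅ (k : ℕ) (q : Fin (k+1) → Fin Qn),
        LinearMap.ker (Matrix.mulVecLin (C (q (Fin.last k)) * wordProd A (Fin.init q))) := by
  change obsKer A C (n - 1) = ⨅ k, wordKer A C k
  refine le_antisymm (le_iInf fun k x hx => ?_) fun x hx => ?_
  · rw [← obsKer_eq_of_pred_le A C (le_max_left (n - 1) k), mem_obsKer_iff] at hx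
    exact hx k (le_max_right _ _)
  · exact (mem_obsKer_iff A C).2 fun k _ => Submodule.mem_iInf _ |>.1 hx k
end

section
/- Let {(A_q,B_q,C_q)}_{q=1}^Q define an affine LPV system with scheduling set P ⊆ ℝ^Q whose linear span is ℝ^Q, and state recursion x(t+1) = ∑_q p_q(t)(A_q x(t)+B_q u(t)) from x(0)=0. Then the linear span of all states reachable from 0 using scheduling values in P equals the linear span of all states reachable from 0 using scheduling values in the standard basis {e_1,…,e_Q}; both equal the span of the vectors A_{q_k}⋯A_{q_1}B_{q_0}e for k ≥ 0, q_i ∈ {1,…,Q}, e ∈ ℝ^m. -/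
/-!
A state reached at time `t + 1` is `∑_q p_q (A_q x + B_q u)`, which is linear in the last
scheduling value `p`. Hence the span `V` of the states reachable with scheduling values in `P`
contains this expression for every `p` in `span P = ℝ^Q`, in particular for each `e_q`: so
`B_q u ∈ V` (take `x = 0`) and `A_q x ∈ V` for every reachable `x`. Thus `V` contains all the
vectors `A_{q_k} ⋯ A_{q_1} B_{q_0} e`. Conversely, their span contains every `B_q u` and is
`A_q`-invariant, so by induction along a trajectory it contains every reachable state. The
characterisation does not depend on `P`, which gives the comparison with the standard basis.
-/

open Matrix

/-- States reachable from the zero initial state at some time `t ≥ 1`, using inputs `u`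
and scheduling signals taking values in `P`. -/
def reachSet {Qn n m : ℕ} (A : Fin Qn → Matrix (Fin n) (Fin n) ℝ)
    (B : Fin Qn → Matrix (Fin n) (Fin m) ℝ) (P : Set (Fin Qn → ℝ)) :
    Set (Fin n → ℝ) :=
  {z | ∃ (t : ℕ), 1 ≤ t ∧ ∃ (u : ℕ → Fin m → ℝ) (p : ℕ → Fin Qn → ℝ)
        (x : ℕ → Fin n → ℝ),
      (∀ s, p s ∈ P) ∧ x 0 = 0 ∧
      (∀ s, x (s+1) = ∑ q : Fin Qn, p s q • (A q *ᵥ x s + B q *ᵥ u s)) ∧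
      z = x t}

theorem LinearMap.apply_mem_of_mem_span {R M N : Type*} [Semiring R] [AddCommMonoid M]
    [AddCommMonoid N] [Module R M] [Module R N] (f : M →ₗ[R] N) {S : Set M}
    {V : Submodule R N} (h : ∀ s ∈ S, f s ∈ V) {v : M} (hv : v ∈ Submodule.span R S) :
    f v ∈ V :=
  (Submodule.map_span_le f S V).2 h (Submodule.mem_map_of_mem hv)

section Words

variable {Qn n m : ℕ} (A : Fin Qn → Matrix (Fin n) (Fin n) ℝ)
  (B : Fin Qn → Matrix (Fin n) (Fin m) ℝ)

theorem wordProd_snoc {k : ℕ} (r : Fin k → Fin Qn) (q : Fin Qn) :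
    wordProd A (Fin.snoc r q : Fin (k + 1) → Fin Qn) = A q * wordProd A r := by
  simp only [wordProd, Fin.snoc_last, Fin.init_snoc]

def wordVectors : Set (Fin n → ℝ) :=
  {z | ∃ (k : ℕ) (q : Fin (k + 1) → Fin Qn) (e : Fin m → ℝ),
    z = wordProd A (fun i : Fin k => q i.succ) *ᵥ (B (q 0) *ᵥ e)}

theorem wordProd_mulVec_mem_wordVectors {k : ℕ} (r : Fin k → Fin Qn) (q₀ : Fin Qn)
    (e : Fin m → ℝ) : wordProd A r *ᵥ (B q₀ *ᵥ e) ∈ wordVectors A B :=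
  ⟨k, Fin.cons q₀ r, e, by simp only [Fin.cons_succ, Fin.cons_zero]⟩

variable {A B}

theorem wordProd_mulVec_mem_of_invariant {V : Submodule ℝ (Fin n → ℝ)}
    (hB : ∀ q e, B q *ᵥ e ∈ V) (hA : ∀ q, ∀ v ∈ V, A q *ᵥ v ∈ V) :
    ∀ {k : ℕ} (r : Fin k → Fin Qn) (q₀ : Fin Qn) (e : Fin m → ℝ),
      wordProd A r *ᵥ (B q₀ *ᵥ e) ∈ V
  | 0, _, q₀, e => by simpa only [wordProd, one_mulVec] using hB q₀ e
  | k + 1, r, q₀, e => by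
    rw [wordProd, ← mulVec_mulVec]
    exact hA _ _ (wordProd_mulVec_mem_of_invariant hB hA (Fin.init r) q₀ e)

theorem span_wordVectors_le {V : Submodule ℝ (Fin n → ℝ)}
    (hB : ∀ q e, B q *ᵥ e ∈ V) (hA : ∀ q, ∀ v ∈ V, A q *ᵥ v ∈ V) :
    Submodule.span ℝ (wordVectors A B) ≤ V := by
  rw [Submodule.span_le]
  rintro _ ⟨k, q, e, rfl⟩
  exact wordProd_mulVec_mem_of_invariant hB hA _ (q 0) e

theorem mulVec_mem_span_wordVectors (q : Fin Qn) {v : Fin n → ℝ}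
    (hv : v ∈ Submodule.span ℝ (wordVectors A B)) :
    A q *ᵥ v ∈ Submodule.span ℝ (wordVectors A B) := by
  refine (A q).mulVecLin.apply_mem_of_mem_span ?_ hv
  rintro _ ⟨k, r, e, rfl⟩
  rw [mulVecLin_apply, mulVec_mulVec, ← wordProd_snoc]
  exact Submodule.subset_span (wordProd_mulVec_mem_wordVectors A B _ _ e)

theorem mulVec_mem_wordVectors (q : Fin Qn) (e : Fin m → ℝ) :
    B q *ᵥ e ∈ wordVectors A B := by
  simpa only [wordProd, one_mulVec] using
    wordProd_mulVec_mem_wordVectors A B (Fin.elim0 : Fin 0 → Fin Qn) q e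

end Words

section Reachability

variable {Qn n m : ℕ} {A : Fin Qn → Matrix (Fin n) (Fin n) ℝ}
  {B : Fin Qn → Matrix (Fin n) (Fin m) ℝ} {P : Set (Fin Qn → ℝ)}

theorem reachSet_subset_of_invariant {V : Submodule ℝ (Fin n → ℝ)}
    (hB : ∀ q e, B q *ᵥ e ∈ V) (hA : ∀ q, ∀ v ∈ V, A q *ᵥ v ∈ V) :
    reachSet A B P ⊆ V := by
  rintro _ ⟨t, -, u, p, x, -, hx₀, hx, rfl⟩
  induction t with
  | zero => exact hx₀ ▸ V.zero_mem
  | succ s ih =>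
    rw [hx s]
    exact V.sum_mem fun q _ => V.smul_mem _ (V.add_mem (hA q _ ih) (hB q _))

variable (A B) in
def trajectory (u : ℕ → Fin m → ℝ) (p : ℕ → Fin Qn → ℝ) : ℕ → Fin n → ℝ
  | 0 => 0
  | s + 1 => ∑ q, p s q • (A q *ᵥ trajectory u p s + B q *ᵥ u s)

theorem trajectory_eq_of_forall_lt {u : ℕ → Fin m → ℝ} {p : ℕ → Fin Qn → ℝ}
    {x : ℕ → Fin n → ℝ} (hx₀ : x 0 = 0)
    (hx : ∀ s, x (s + 1) = ∑ q, p s q • (A q *ᵥ x s + B q *ᵥ u s))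
    {u' : ℕ → Fin m → ℝ} {p' : ℕ → Fin Qn → ℝ} {t : ℕ}
    (hu : ∀ s < t, u' s = u s) (hp : ∀ s < t, p' s = p s) :
    trajectory A B u' p' t = x t := by
  induction t with
  | zero => exact hx₀.symm
  | succ t ih =>
    rw [trajectory, hx, ih (fun s hs => hu s (by omega)) (fun s hs => hp s (by omega)),
      hu t t.lt_succ_self, hp t t.lt_succ_self]

theorem step_mem_reachSet {u : ℕ → Fin m → ℝ} {p : ℕ → Fin Qn → ℝ} {x : ℕ → Fin n → ℝ}
    (hp : ∀ s, p s ∈ P) (hx₀ : x 0 = 0)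
    (hx : ∀ s, x (s + 1) = ∑ q, p s q • (A q *ᵥ x s + B q *ᵥ u s))
    (t : ℕ) {c : Fin Qn → ℝ} (hc : c ∈ P) (e : Fin m → ℝ) :
    ∑ q, c q • (A q *ᵥ x t + B q *ᵥ e) ∈ reachSet A B P := by
  let u' : ℕ → Fin m → ℝ := fun s => if s < t then u s else e
  let p' : ℕ → Fin Qn → ℝ := fun s => if s < t then p s else c
  have hp' : ∀ s, p' s ∈ P := fun s => by
    by_cases hs : s < t <;> simp only [p', hs, if_true, if_false, hp s, hc]
  have hx' : trajectory A B u' p' t = x t :=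
    trajectory_eq_of_forall_lt hx₀ hx (fun s hs => if_pos hs) (fun s hs => if_pos hs)
  refine ⟨t + 1, by omega, u', p', trajectory A B u' p', hp', rfl, fun _ => rfl, ?_⟩
  simp only [trajectory, hx', u', p', lt_irrefl, if_false]

theorem add_mem_span_reachSet (hP : Submodule.span ℝ P = ⊤) {z : Fin n → ℝ}
    {e : Fin m → ℝ}
    (hz : ∀ c ∈ P, ∑ q, c q • (A q *ᵥ z + B q *ᵥ e) ∈ reachSet A B P)
    (q : Fin Qn) : A q *ᵥ z + B q *ᵥ e ∈ Submodule.span ℝ (reachSet A B P) := by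
  let f := Fintype.linearCombination ℝ fun q => A q *ᵥ z + B q *ᵥ e
  have hf : ∀ c ∈ P, f c ∈ Submodule.span ℝ (reachSet A B P) := fun c hc =>
    Submodule.subset_span (by simpa only [f, Fintype.linearCombination_apply] using hz c hc)
  simpa only [f, Fintype.linearCombination_apply_single, one_smul] using
    f.apply_mem_of_mem_span hf
      (hP ▸ Submodule.mem_top : Pi.single q 1 ∈ Submodule.span ℝ P)

theorem mulVec_mem_span_reachSet (hP : Submodule.span ℝ P = ⊤) (q : Fin Qn)
    (e : Fin m → ℝ) : B q *ᵥ e ∈ Submodule.span ℝ (reachSet A B P) := by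
  have hz : ∀ c ∈ P, ∑ q, c q • (A q *ᵥ 0 + B q *ᵥ e) ∈ reachSet A B P := fun c hc =>
    step_mem_reachSet (x := trajectory A B (fun _ => e) (fun _ => c)) (fun _ => hc) rfl
      (fun _ => rfl) 0 hc e
  simpa only [mulVec_zero, zero_add] using add_mem_span_reachSet hP hz q

theorem mulVec_mem_span_reachSet_of_mem (hP : Submodule.span ℝ P = ⊤) (q : Fin Qn)
    {v : Fin n → ℝ} (hv : v ∈ Submodule.span ℝ (reachSet A B P)) :
    A q *ᵥ v ∈ Submodule.span ℝ (reachSet A B P) := by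
  refine (A q).mulVecLin.apply_mem_of_mem_span ?_ hv
  rintro _ ⟨t, -, u, p, x, hp, hx₀, hx, rfl⟩
  have hz : ∀ c ∈ P, ∑ q, c q • (A q *ᵥ x t + B q *ᵥ 0) ∈ reachSet A B P :=
    fun c hc => step_mem_reachSet hp hx₀ hx t hc 0
  rw [mulVecLin_apply]
  simpa only [mulVec_zero, add_zero] using add_mem_span_reachSet hP hz q

theorem span_reachSet_eq_span_wordVectors (hP : Submodule.span ℝ P = ⊤) :
    Submodule.span ℝ (reachSet A B P) = Submodule.span ℝ (wordVectors A B) :=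
  le_antisymm
    (Submodule.span_le.2 <| reachSet_subset_of_invariant
      (fun q e => Submodule.subset_span (mulVec_mem_wordVectors q e))
      fun q _ => mulVec_mem_span_wordVectors q)
    (span_wordVectors_le (mulVec_mem_span_reachSet hP) fun q _ =>
      mulVec_mem_span_reachSet_of_mem hP q)

end Reachability

/-- If the scheduling set `P` spans `ℝ^Q`, the linear span of the states reachable from `0`
with scheduling values in `P` equals the span of the states reachable with scheduling
values in the standard basis `{e_1,…,e_Q}`, and both equal the span of the vectors
`A_{q_k}⋯A_{q_1} B_{q_0} e`. -/
theorem stmt13 {Qn n m : ℕ}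
    (A : Fin Qn → Matrix (Fin n) (Fin n) ℝ)
    (B : Fin Qn → Matrix (Fin n) (Fin m) ℝ)
    (P : Set (Fin Qn → ℝ)) (hP : Submodule.span ℝ P = ⊤) :
    Submodule.span ℝ (reachSet A B P) =
      Submodule.span ℝ
        (reachSet A B (Set.range fun q : Fin Qn => (Pi.single q 1 : Fin Qn → ℝ))) ∧
    Submodule.span ℝ (reachSet A B P) =
      Submodule.span ℝ {z : Fin n → ℝ | ∃ (k : ℕ) (q : Fin (k+1) → Fin Qn)
        (e : Fin m → ℝ), z = wordProd A (fun i : Fin k => q i.succ) *ᵥ (B (q 0) *ᵥ e)} := by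
  have hbasis : Submodule.span ℝ
      (Set.range fun q : Fin Qn => (Pi.single q 1 : Fin Qn → ℝ)) = ⊤ := by
    rw [show (fun q => Pi.single q 1) = ⇑(Pi.basisFun ℝ (Fin Qn)) from
      funext fun q => (Pi.basisFun_apply ℝ _ q).symm]
    exact (Pi.basisFun ℝ (Fin Qn)).span_eq
  rw [span_reachSet_eq_span_wordVectors hP, span_reachSet_eq_span_wordVectors hbasis]
  exact ⟨rfl, rfl⟩
end

section
/- Let S : {words over {1,…,Q} of length ≥ 2} → ℝ^{1×m} and for a word sequence p̄ = p_1⋯p_k of vectors in ℝ^Q define f^{p̄} as the function assigning to each finite input/scheduling sequence the corresponding convolution value shifted by the suffix (p_1,0)⋯(p_k,0). Then the map Φ sending f^{p̄} to the vector of row combinations H_v = ∑_{|s| = k} [p̄^{s1}, …, p̄^{sQ}] M(vs) (where p̄^s = ∏_i (p_i)_{s_i} and M is the Hankel block built from S) extends to a well-defined injective linear map from span{f^{p̄} : p̄} into the row space of the Hankel matrix of S; hence span{f^{p̄}} is finite-dimensional if and only if the Hankel matrix has finite rank. -/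
open Matrix

/-- The shifted input-output map `f^{p̄}`: feed the input/scheduling word `w`, then the
scheduling values `p̄ = p_1 ⋯ p_k` with zero input. -/
def shiftMap {Qn m : ℕ} (f : List ((Fin Qn → ℝ) × (Fin m → ℝ)) → ℝ)
    (pb : List (Fin Qn → ℝ)) : List ((Fin Qn → ℝ) × (Fin m → ℝ)) → ℝ :=
  fun w => f (w ++ pb.map fun p => (p, (0 : Fin m → ℝ)))

/-- Rows of the Hankel matrix of `S` (single-output case): the row indexed by the word
`w` and letter `i` has, at column `(v, j, c)`, the entry `S(j · v · w · i)_c`. -/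
def hankelRowOf {Qn m : ℕ} (S : List (Fin Qn) → Fin m → ℝ)
    (ri : List (Fin Qn) × Fin Qn) (ci : List (Fin Qn) × Fin Qn × Fin m) : ℝ :=
  S (ci.2.1 :: (ci.1 ++ ri.1 ++ [ri.2])) ci.2.2

/-- The row combination `H_v = ∑_{|s| = |p̄|} p̄^s S(j · v · s)` associated with `f^{p̄}`. -/
def hankelComb {Qn m : ℕ} (S : List (Fin Qn) → Fin m → ℝ)
    (pb : List (Fin Qn → ℝ)) : (List (Fin Qn) × Fin Qn × Fin m) → ℝ :=
  fun ci => ∑ s : Fin pb.length → Fin Qn,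
    (∏ i : Fin pb.length, pb.get i (s i)) * S (ci.2.1 :: (ci.1 ++ List.ofFn s)) ci.2.2

/-!
The input-output map is a generalized convolution `genConvolution K`, with `K` agreeing with `S`
on words of length at least two. Appending the zero-input suffix `p̄` turns the kernel into
`q ↦ ∑_{|s| = k} p̄^s K(q s)`, so every `f^{p̄}`, and hence every element of their span, is again
a generalized convolution. A generalized convolution takes the value `K(j v)_c` on the impulse
word `(e_j, e_c)(e_{v_1}, 0)⋯(e_{v_l}, 0)` and is determined by these values. Hence `Φ`,
evaluation on impulse words, is injective on the span; it sends `f^{p̄}` to `H_{p̄}`, and each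
Hankel row is some `H_{p̄}` with `p̄` made of unit vectors, so the image of the span is the row
space.
-/

lemma ofFn_getElem_add_eq_map_drop {X Y : Type*} (g : X → Y) (l : List X) {k n : ℕ}
    (h : k + n = l.length) :
    List.ofFn (fun i : Fin n => g (l[k + i]'(by omega))) = (l.drop k).map g := by
  apply List.ext_getElem <;> simp [h.symm]

section MonomialSum

variable {R α M : Type*} [CommSemiring R] [Fintype α] [AddCommMonoid M] [Module R M]

/-- `monomialSum ps K = ∑_{|s| = |ps|} ps^s • K s`, where `ps^s = ∏ i, ps_i (s_i)`
(`monomialSum_ofFn`). -/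
def monomialSum : List (α → R) → (List α → M) →ₗ[R] M
  | [] => LinearMap.proj []
  | p :: ps => ∑ a, p a • (monomialSum ps).comp (LinearMap.funLeft R M (List.cons a))

@[simp] lemma monomialSum_nil (K : List α → M) : monomialSum ([] : List (α → R)) K = K [] := rfl

lemma monomialSum_cons (p : α → R) (ps : List (α → R)) (K : List α → M) :
    monomialSum (p :: ps) K = ∑ a, p a • monomialSum ps (fun s => K (a :: s)) := by
  simp [monomialSum, LinearMap.funLeft]
  rfl

lemma monomialSum_congr {ps : List (α → R)} {K K' : List α → M}
    (h : ∀ s, s.length = ps.length → K s = K' s) : monomialSum ps K = monomialSum ps K' := by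
  induction ps generalizing K K' with
  | nil => exact h [] rfl
  | cons p ps ih =>
    simp only [monomialSum_cons]
    exact Finset.sum_congr rfl fun a _ => by
      rw [ih fun s hs => h (a :: s) (by simp [hs])]

lemma monomialSum_mem {ps : List (α → R)} {K : List α → M} (P : Submodule R M)
    (h : ∀ s, s.length = ps.length → K s ∈ P) : monomialSum ps K ∈ P := by
  induction ps generalizing K with
  | nil => exact h [] rfl
  | cons p ps ih =>
    rw [monomialSum_cons]
    exact P.sum_mem fun a _ => P.smul_mem _ (ih fun s hs => h (a :: s) (by simp [hs]))

lemma monomialSum_apply {β : Type*} (ps : List (α → R)) (K : List α → β → M) (b : β) :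
    monomialSum ps K b = monomialSum ps (fun s => K s b) := by
  induction ps generalizing K with
  | nil => rfl
  | cons p ps ih => simp [monomialSum_cons, Finset.sum_apply, ih]

lemma monomialSum_append (ps rs : List (α → R)) (K : List α → M) :
    monomialSum (ps ++ rs) K = monomialSum ps fun s => monomialSum rs fun r => K (s ++ r) := by
  induction ps generalizing K with
  | nil => rfl
  | cons p ps ih => simp only [List.cons_append, monomialSum_cons, ih]

lemma monomialSum_map_single [DecidableEq α] (v : List α) (K : List α → M) :
    monomialSum (v.map fun a => Pi.single a (1 : R)) K = K v := by
  induction v generalizing K with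
  | nil => rfl
  | cons b v ih => simp [monomialSum_cons, ih, Pi.single_apply]

lemma monomialSum_ofFn {n : ℕ} (p : Fin n → α → R) (K : List α → M) :
    monomialSum (List.ofFn p) K = ∑ s : Fin n → α, (∏ i, p i (s i)) • K (List.ofFn s) := by
  induction n generalizing K with
  | zero => simp
  | succ n ih =>
    rw [List.ofFn_succ, monomialSum_cons, ← (Fin.consEquiv fun _ => α).sum_comp,
      Fintype.sum_prod_type]
    refine Finset.sum_congr rfl fun a _ => ?_
    simp [ih, Fin.prod_univ_succ, Finset.smul_sum, mul_smul, List.ofFn_succ]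

end MonomialSum

section GenConvolution

variable {R α ι : Type*} [CommSemiring R] [Fintype α] [Fintype ι]

/-- A letter `x` carries the scheduling value `x.1` and the input `x.2`. The input at time `t`
meets `K` weighted by the scheduling values from time `t` on (see `genConvolution_eq_sum`). -/
def genConvolution (K : List α → ι → R) : List ((α → R) × (ι → R)) → R
  | [] => 0
  | x :: w => monomialSum ((x :: w).map Prod.fst) K ⬝ᵥ x.2 + genConvolution K w

lemma genConvolution_cons (K : List α → ι → R) (x : (α → R) × (ι → R))
    (w : List ((α → R) × (ι → R))) :
    genConvolution K (x :: w) =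
      monomialSum ((x :: w).map Prod.fst) K ⬝ᵥ x.2 + genConvolution K w :=
  rfl

def genConvolutionₗ : (List α → ι → R) →ₗ[R] List ((α → R) × (ι → R)) → R where
  toFun := genConvolution
  map_add' K K' := funext fun w => by
    induction w with
    | nil => simp [genConvolution]
    | cons x w ih =>
      simp only [genConvolution_cons, map_add, add_dotProduct, Pi.add_apply] at ih ⊢
      rw [ih]; ring
  map_smul' r K := funext fun w => by
    induction w with
    | nil => simp [genConvolution]
    | cons x w ih =>
      simp only [genConvolution_cons, map_smul, smul_dotProduct, Pi.smul_apply, smul_eq_mul,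
        RingHom.id_apply] at ih ⊢
      rw [ih]; ring

lemma genConvolution_eq_sum (K : List α → ι → R) (w : List ((α → R) × (ι → R))) :
    genConvolution K w = ∑ t ∈ Finset.range w.length,
      monomialSum ((w.drop t).map Prod.fst) K ⬝ᵥ (w.getD t 0).2 := by
  induction w with
  | nil => rfl
  | cons x w ih =>
    rw [genConvolution_cons, ih, List.length_cons, Finset.sum_range_succ', add_comm]
    rfl

lemma genConvolution_eq_sum_of_singleton_eq_zero {K : List α → ι → R} (hK : ∀ a, K [a] = 0)
    (w : List ((α → R) × (ι → R))) :
    genConvolution K w = ∑ j ∈ Finset.range (w.length - 1),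
      monomialSum ((w.drop (w.length - 2 - j)).map Prod.fst) K ⬝ᵥ
        (w.getD (w.length - 2 - j) 0).2 := by
  rw [genConvolution_eq_sum]
  cases hn : w.length with
  | zero => rfl
  | succ n =>
    have hlast : monomialSum ((w.drop n).map Prod.fst) K = 0 := by
      obtain ⟨p, hp⟩ := List.length_eq_one_iff.mp
        (by simp [hn] : ((w.drop n).map Prod.fst).length = 1)
      simp [hp, monomialSum_cons, hK]
    rw [Finset.sum_range_succ, hlast, zero_dotProduct, add_zero, Nat.add_sub_cancel,
      ← Finset.sum_range_reflect]
    exact Finset.sum_congr rfl fun j _ => by rw [show n - 1 - j = n + 1 - 2 - j by omega]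

lemma genConvolution_eq_zero_of_input_eq_zero (K : List α → ι → R)
    {w : List ((α → R) × (ι → R))} (hw : ∀ x ∈ w, x.2 = 0) : genConvolution K w = 0 := by
  induction w with
  | nil => rfl
  | cons x w ih =>
    rw [genConvolution_cons, hw x List.mem_cons_self, dotProduct_zero, zero_add,
      ih fun y hy => hw y (List.mem_cons_of_mem x hy)]

lemma genConvolution_append_zero_input (K : List α → ι → R) (w : List ((α → R) × (ι → R)))
    (ps : List (α → R)) :
    genConvolution K (w ++ ps.map (·, 0)) =
      genConvolution (fun q => monomialSum ps fun s => K (q ++ s)) w := by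
  induction w with
  | nil => exact genConvolution_eq_zero_of_input_eq_zero K (by simp)
  | cons x w ih =>
    rw [List.cons_append, genConvolution_cons, genConvolution_cons, ih, ← List.cons_append,
      List.map_append, monomialSum_append]
    simp [Function.comp_def]

lemma genConvolution_eq_zero {K : List α → ι → R} (hK : ∀ a s, K (a :: s) = 0) :
    genConvolution K = 0 := by
  funext w
  induction w with
  | nil => rfl
  | cons x w ih =>
    have hK' : ∀ a, (fun s => K (a :: s)) = 0 := fun a => funext (hK a)
    simp [genConvolution_cons, ih, monomialSum_cons, hK']

variable [DecidableEq α] [DecidableEq ι]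

def impulseWord (ci : List α × α × ι) : List ((α → R) × (ι → R)) :=
  (Pi.single ci.2.1 1, Pi.single ci.2.2 1) :: ci.1.map fun a => (Pi.single a 1, 0)

lemma genConvolution_impulseWord (K : List α → ι → R) (ci : List α × α × ι) :
    genConvolution K (impulseWord ci) = K (ci.2.1 :: ci.1) ci.2.2 := by
  obtain ⟨v, j, c⟩ := ci
  rw [impulseWord, genConvolution_cons, genConvolution_eq_zero_of_input_eq_zero K (by simp),
    List.map_cons, List.map_map]
  change monomialSum ((j :: v).map fun a => Pi.single a (1 : R)) K ⬝ᵥ Pi.single c 1 + 0 = _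
  rw [monomialSum_map_single, dotProduct_single, mul_one, add_zero]

lemma genConvolution_eq_zero_of_impulseWord {K : List α → ι → R}
    (hK : ∀ ci, genConvolution K (impulseWord ci) = 0) : genConvolution K = 0 :=
  genConvolution_eq_zero fun a s => funext fun c => by
    simpa [genConvolution_impulseWord] using hK (s, a, c)

end GenConvolution

section HankelMatrix

variable {Qn m : ℕ}

lemma exists_genConvolution_eq (S : List (Fin Qn) → Fin m → ℝ)
    (f : List ((Fin Qn → ℝ) × (Fin m → ℝ)) → ℝ)
    (hf : ∀ w : List ((Fin Qn → ℝ) × (Fin m → ℝ)),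
      f w = ∑ j ∈ (Finset.range (w.length - 1)).attach,
        ∑ q : Fin ((j : ℕ) + 2) → Fin Qn,
          (∏ i : Fin ((j : ℕ) + 2),
            (w[w.length - 2 - (j : ℕ) + (i : ℕ)]'(by grind)).1 (q i)) *
          ∑ c : Fin m, S (List.ofFn q) c *
            (w[w.length - 2 - (j : ℕ)]'(by grind)).2 c) :
    ∃ K : List (Fin Qn) → Fin m → ℝ,
      (∀ q, 2 ≤ q.length → K q = S q) ∧ f = genConvolution K := by
  set K := fun q : List (Fin Qn) => if 2 ≤ q.length then S q else 0
  refine ⟨K, fun q hq => if_pos hq, funext fun w => ?_⟩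
  rw [hf, genConvolution_eq_sum_of_singleton_eq_zero (fun a => if_neg (by simp))]
  conv_rhs => rw [← Finset.sum_attach]
  refine Finset.sum_congr rfl fun ⟨j, hj⟩ _ => ?_
  have hj' := Finset.mem_range.mp hj
  have hK : monomialSum ((w.drop (w.length - 2 - j)).map Prod.fst) K =
      monomialSum (List.ofFn fun i : Fin (j + 2) => (w[w.length - 2 - j + i]'(by omega)).1)
        S := by
    rw [ofFn_getElem_add_eq_map_drop Prod.fst w (by omega)]
    refine monomialSum_congr fun s hs => if_pos ?_
    simp only [List.length_map, List.length_drop] at hs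
    omega
  rw [hK, monomialSum_ofFn, List.getD_eq_getElem _ 0 (by omega), sum_dotProduct]
  simp only [smul_dotProduct, smul_eq_mul]
  rfl

lemma shiftMap_genConvolution (K : List (Fin Qn) → Fin m → ℝ) (pb : List (Fin Qn → ℝ)) :
    shiftMap (genConvolution K) pb = genConvolution fun q => monomialSum pb fun s => K (q ++ s) :=
  funext fun w => genConvolution_append_zero_input K w pb

lemma hankelComb_eq_monomialSum (S : List (Fin Qn) → Fin m → ℝ) (pb : List (Fin Qn → ℝ)) :
    hankelComb S pb = monomialSum pb fun s ci => S (ci.2.1 :: (ci.1 ++ s)) ci.2.2 := by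
  conv_rhs => rw [← List.ofFn_get pb]
  rw [monomialSum_ofFn]
  funext ci
  simp [hankelComb, Finset.sum_apply]

lemma hankelComb_mem_span (S : List (Fin Qn) → Fin m → ℝ) {pb : List (Fin Qn → ℝ)}
    (hpb : pb ≠ []) :
    hankelComb S pb ∈ Submodule.span ℝ (Set.range fun ri => hankelRowOf S ri) := by
  rw [hankelComb_eq_monomialSum]
  refine monomialSum_mem _ fun s hs => ?_
  have hs' : s ≠ [] := by rintro rfl; exact hpb (List.length_eq_zero_iff.mp hs.symm)
  refine Submodule.subset_span ⟨(s.dropLast, s.getLast hs'), funext fun ci => ?_⟩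
  simp [hankelRowOf, List.append_assoc, List.dropLast_append_getLast]

lemma hankelRowOf_eq_hankelComb (S : List (Fin Qn) → Fin m → ℝ)
    (ri : List (Fin Qn) × Fin Qn) :
    hankelRowOf S ri = hankelComb S ((ri.1 ++ [ri.2]).map fun a => Pi.single a 1) := by
  rw [hankelComb_eq_monomialSum, monomialSum_map_single]
  funext ci
  simp [hankelRowOf]

lemma funLeft_impulseWord_shiftMap (S : List (Fin Qn) → Fin m → ℝ)
    {K : List (Fin Qn) → Fin m → ℝ} (hKS : ∀ q, 2 ≤ q.length → K q = S q)
    {pb : List (Fin Qn → ℝ)} (hpb : pb ≠ []) :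
    LinearMap.funLeft ℝ ℝ impulseWord (shiftMap (genConvolution K) pb) = hankelComb S pb := by
  funext ci
  obtain ⟨v, j, c⟩ := ci
  rw [LinearMap.funLeft_apply, shiftMap_genConvolution,
    genConvolution_impulseWord, hankelComb_eq_monomialSum]
  have hlen := List.length_pos_iff.mpr hpb
  rw [monomialSum_apply, monomialSum_apply]
  exact monomialSum_congr fun s hs => by rw [hKS _ (by simp [hs]; omega)]; rfl

lemma map_funLeft_impulseWord_span_shiftMap (S : List (Fin Qn) → Fin m → ℝ)
    {K : List (Fin Qn) → Fin m → ℝ} (hKS : ∀ q, 2 ≤ q.length → K q = S q) :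
    (Submodule.span ℝ {g | ∃ pb, pb ≠ [] ∧ g = shiftMap (genConvolution K) pb}).map
        (LinearMap.funLeft ℝ ℝ impulseWord) =
      Submodule.span ℝ (Set.range fun ri => hankelRowOf S ri) := by
  rw [Submodule.map_span]
  apply le_antisymm
  · refine Submodule.span_le.mpr ?_
    rintro _ ⟨g, ⟨pb, hpb, rfl⟩, rfl⟩
    rw [funLeft_impulseWord_shiftMap S hKS hpb]
    exact hankelComb_mem_span S hpb
  · refine Submodule.span_mono ?_
    rintro _ ⟨ri, rfl⟩
    have hpb : ((ri.1 ++ [ri.2]).map fun a => Pi.single a (1 : ℝ)) ≠ [] := by simp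
    exact ⟨_, ⟨_, hpb, rfl⟩,
      (funLeft_impulseWord_shiftMap S hKS hpb).trans (hankelRowOf_eq_hankelComb S ri).symm⟩

end HankelMatrix

/-- The map `Φ : f^{p̄} ↦ H_{p̄}` extends to a well-defined injective linear map from
`span{f^{p̄}}` into the row space of the Hankel matrix of `S`; hence `span{f^{p̄}}` is
finite-dimensional iff the Hankel matrix has finite rank. Here `f` is the input-output
map given by the generalized convolution representation with coefficients `S`. -/
theorem stmt17 {Qn m : ℕ} (S : List (Fin Qn) → Fin m → ℝ)
    (f : List ((Fin Qn → ℝ) × (Fin m → ℝ)) → ℝ)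
    (hf : ∀ w : List ((Fin Qn → ℝ) × (Fin m → ℝ)),
      f w = ∑ j ∈ (Finset.range (w.length - 1)).attach,
        ∑ q : Fin ((j : ℕ) + 2) → Fin Qn,
          (∏ i : Fin ((j : ℕ) + 2),
            (w.get ⟨w.length - 2 - (j : ℕ) + (i : ℕ), by
              have h1 := Finset.mem_range.mp j.2; have h2 := i.isLt; omega⟩).1 (q i)) *
          ∑ c : Fin m, S (List.ofFn q) c *
            (w.get ⟨w.length - 2 - (j : ℕ), by
              have h1 := Finset.mem_range.mp j.2; omega⟩).2 c) :
    ∃ Φ : ↥(Submodule.span ℝ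
        {g : List ((Fin Qn → ℝ) × (Fin m → ℝ)) → ℝ |
          ∃ pb : List (Fin Qn → ℝ), pb ≠ [] ∧ g = shiftMap f pb}) →ₗ[ℝ]
        ((List (Fin Qn) × Fin Qn × Fin m) → ℝ),
      Function.Injective Φ ∧
      (∀ v, (Φ v : (List (Fin Qn) × Fin Qn × Fin m) → ℝ) ∈
        Submodule.span ℝ (Set.range fun ri => hankelRowOf S ri)) ∧
      (∀ (pb : List (Fin Qn → ℝ)) (hpb : pb ≠ [])
        (hmem : shiftMap f pb ∈ Submodule.span ℝ
          {g : List ((Fin Qn → ℝ) × (Fin m → ℝ)) → ℝ |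
            ∃ pb' : List (Fin Qn → ℝ), pb' ≠ [] ∧ g = shiftMap f pb'}),
        Φ ⟨shiftMap f pb, hmem⟩ = hankelComb S pb) ∧
      (FiniteDimensional ℝ ↥(Submodule.span ℝ
          {g : List ((Fin Qn → ℝ) × (Fin m → ℝ)) → ℝ |
            ∃ pb : List (Fin Qn → ℝ), pb ≠ [] ∧ g = shiftMap f pb}) ↔
        FiniteDimensional ℝ ↥(Submodule.span ℝ (Set.range fun ri => hankelRowOf S ri))) := by
  obtain ⟨K, hKS, rfl⟩ := exists_genConvolution_eq S f hf
  set V := Submodule.span ℝ {g | ∃ pb, pb ≠ [] ∧ g = shiftMap (genConvolution K) pb}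
  set Ψ := LinearMap.funLeft ℝ ℝ (impulseWord (R := ℝ) (α := Fin Qn) (ι := Fin m))
  have hΨ : ∀ pb, pb ≠ [] → Ψ (shiftMap (genConvolution K) pb) = hankelComb S pb :=
    fun pb hpb => funLeft_impulseWord_shiftMap S hKS hpb
  have hV : V ≤ LinearMap.range genConvolutionₗ := Submodule.span_le.mpr <| by
    rintro _ ⟨pb, -, rfl⟩
    exact ⟨_, (shiftMap_genConvolution K pb).symm⟩
  have hinj : Function.Injective (Ψ.domRestrict V) := by
    refine (injective_iff_map_eq_zero _).mpr fun ⟨g, hg⟩ h0 => ?_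
    obtain ⟨K', rfl⟩ := hV hg
    exact Subtype.ext (genConvolution_eq_zero_of_impulseWord fun ci => congrFun h0 ci)
  have hmap : V.map Ψ = Submodule.span ℝ (Set.range fun ri => hankelRowOf S ri) :=
    map_funLeft_impulseWord_span_shiftMap S hKS
  have e : V ≃ₗ[ℝ] Submodule.span ℝ (Set.range fun ri => hankelRowOf S ri) :=
    (LinearEquiv.ofInjective _ hinj).trans
      (LinearEquiv.ofEq _ _ (by rw [LinearMap.range_domRestrict, hmap]))
  exact ⟨Ψ.domRestrict V, hinj, fun g => hmap ▸ Submodule.mem_map_of_mem g.2,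
    fun pb hpb _ => hΨ pb hpb, Module.Finite.equiv_iff e⟩
end

section
/- Let f^{p̄} (for p̄ a finite nonempty sequence of vectors in ℝ^Q) be functions on a set X satisfying the shift property f^{p_1⋯p_{r+i}}(w) = f^{p_{r+1}⋯p_{r+i}}(σ_{p_1⋯p_r} w) for a family of maps σ on X, and suppose there exist polynomials Q_0,…,Q_n on (ℝ^Q)^{n+1} with Q_0 not identically zero such that ∑_{j=0}^n Q_j(p_1,…,p_{n+1}) f^{p_1⋯p_{n+1-j}} = 0 for all p_1,…,p_{n+1} ∈ ℝ^Q. Assume additionally each f^{p_1⋯p_k} is multilinear in p_1,…,p_k. Then span{ f^{p̄} : p̄ } = span{ f^{p̄} : |p̄| ≤ n }, which is finite-dimensional. -/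
/-!
Let `W` be the span of the `F p̄` with `1 ≤ |p̄| ≤ n`. Modulo `W` the recurrence reduces to
`Q₀(p) • F(p₁⋯p_{n+1}) ≡ 0`. On lists of length `n + 1`, `F` is multilinear in `p`, so after
pairing with any linear functional it becomes a polynomial `R` in the coordinates of `p` with
`Q₀ R` vanishing identically; since `Q₀ ≠ 0` and `ℝ` is infinite, `R = 0`, i.e. every
`F` of length `n + 1` lies in `W`. By the shift property `F (x :: l) = F l ∘ σ [x]`, so
precomposition with `σ [x]` maps the generators of `W` to values of `F` of length `≤ n + 1`,
hence preserves `W`, and induction on the length puts every `F p̄` in `W`. Finally `W` is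
finite-dimensional because on each length `k ≤ n`, `F` is a multilinear map on the
finite-dimensional space `(ℝ^Q)^k`.
-/

open MvPolynomial

namespace MultilinearMap

variable {K ι κ V : Type*} [Field K] [AddCommGroup V] [Module K V] [Fintype ι] [Fintype κ]

theorem apply_eq_sum_pi_single [DecidableEq ι] [DecidableEq κ]
    (M : MultilinearMap K (fun _ : ι => κ → K) V) (p : ι → κ → K) :
    M p = ∑ r : ι → κ, (∏ i, p i (r i)) • M fun i => Pi.single (r i) 1 := by
  conv_lhs => rw [funext fun i => pi_eq_sum_univ' (p i), map_sum]
  simp_rw [map_smul_univ]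

theorem finiteDimensional_span_range (M : MultilinearMap K (fun _ : ι => κ → K) V) :
    FiniteDimensional K (Submodule.span K (Set.range M)) := by
  classical
  have := FiniteDimensional.span_of_finite K
    (Set.finite_range fun r : ι → κ => M fun i => Pi.single (r i) 1)
  refine Submodule.finiteDimensional_of_le
    (S₂ := Submodule.span K (Set.range fun r : ι → κ => M fun i => Pi.single (r i) 1))
    (Submodule.span_le.2 ?_)
  rintro _ ⟨p, rfl⟩
  rw [apply_eq_sum_pi_single]
  exact Submodule.sum_mem _ fun r _ => Submodule.smul_mem _ _ (Submodule.subset_span ⟨r, rfl⟩)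

theorem eq_zero_of_eval_ne_zero [Infinite K]
    (M : MultilinearMap K (fun _ : ι => κ → K) V) {P : MvPolynomial (ι × κ) K} (hP : P ≠ 0)
    (hM : ∀ p : ι → κ → K, eval (fun ik => p ik.1 ik.2) P ≠ 0 → M p = 0) : M = 0 := by
  classical
  refine MultilinearMap.ext fun p => ?_
  rw [zero_apply, ← Module.forall_dual_apply_eq_zero_iff K]
  intro φ
  set R : MvPolynomial (ι × κ) K :=
    ∑ r : ι → κ, C (φ (M fun i => Pi.single (r i) 1)) * ∏ i, X (i, r i)
  have eval_R (p : ι → κ → K) : eval (fun ik => p ik.1 ik.2) R = φ (M p) := by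
    simp [R, apply_eq_sum_pi_single M p, mul_comm]
  have hPR : P * R = 0 := MvPolynomial.funext fun x => by
    rw [_root_.map_zero]
    change eval (fun ik => x (ik.1, ik.2)) (P * R) = 0
    by_cases hx : eval x P = 0
    · rw [map_mul, hx, zero_mul]
    · rw [map_mul, eval_R fun i k => x (i, k), hM (fun i k => x (i, k)) hx, _root_.map_zero,
        mul_zero]
  rw [← eval_R, (mul_eq_zero.1 hPR).resolve_left hP, _root_.map_zero]

end MultilinearMap

theorem List.ofFn_update {α : Type*} {m : ℕ} [DecidableEq (Fin m)] (p : Fin m → α) (k : Fin m)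
    (x : α) : List.ofFn (Function.update p k x) = (List.ofFn p).set k x := by
  refine List.ext_getElem (by simp) fun i _ _ => ?_
  simp only [List.getElem_ofFn, List.getElem_set, Function.update_apply, Fin.ext_iff]
  grind

def spanLengthLE (K : Type*) {E V : Type*} [Semiring K] [AddCommMonoid V] [Module K V]
    (F : List E → V) (n : ℕ) : Submodule K V :=
  Submodule.span K {g : V | ∃ pb : List E, pb ≠ [] ∧ pb.length ≤ n ∧ g = F pb}

def MultilinearInEntries (K : Type*) {E V : Type*} [Semiring K] [AddCommMonoid E] [Module K E]
    [AddCommMonoid V] [Module K V] (F : List E → V) : Prop :=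
  ∀ (l₁ l₂ : List E) (c : K) (p p' : E),
    F (l₁ ++ (c • p + p') :: l₂) = c • F (l₁ ++ p :: l₂) + F (l₁ ++ p' :: l₂)

def ofFnMultilinearMap {K E V : Type*} [Field K] [AddCommGroup E] [Module K E] [AddCommGroup V]
    [Module K V] {F : List E → V} (hF : MultilinearInEntries K F) (k : ℕ) :
    MultilinearMap K (fun _ : Fin k => E) V where
  toFun p := F (List.ofFn p)
  map_update_add' p i x y := by
    simp only [List.ofFn_update,
      List.set_eq_take_cons_drop _ (by simp : (i : ℕ) < (List.ofFn p).length)]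
    simpa using hF _ _ 1 x y
  map_update_smul' p i c x := by
    have hzero : ∀ l₁ l₂, F (l₁ ++ 0 :: l₂) = 0 := fun l₁ l₂ => by simpa using hF l₁ l₂ 1 0 0
    simp only [List.ofFn_update,
      List.set_eq_take_cons_drop _ (by simp : (i : ℕ) < (List.ofFn p).length)]
    simpa [hzero] using hF _ _ c x 0

section Shift

variable {K E X : Type*} [Semiring K] {F : List E → X → K} {σ : List E → X → X} {n : ℕ}

theorem map_funLeft_spanLengthLE_le
    (hshift : ∀ a b : List E, b ≠ [] → F (a ++ b) = fun w => F b (σ a w))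
    (hsucc : ∀ l : List E, l ≠ [] → l.length ≤ n + 1 → F l ∈ spanLengthLE K F n) (x : E) :
    (spanLengthLE K F n).map (LinearMap.funLeft K K (σ [x])) ≤ spanLengthLE K F n := by
  rw [spanLengthLE, Submodule.map_span, Submodule.span_le]
  rintro _ ⟨_, ⟨l, hl, hlen, rfl⟩, rfl⟩
  rw [show LinearMap.funLeft K K (σ [x]) (F l) = F (x :: l) from (hshift [x] l hl).symm]
  exact hsucc _ (List.cons_ne_nil _ _) (by simpa using hlen)

theorem mem_spanLengthLE_of_shift
    (hshift : ∀ a b : List E, b ≠ [] → F (a ++ b) = fun w => F b (σ a w))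
    (hsucc : ∀ l : List E, l ≠ [] → l.length ≤ n + 1 → F l ∈ spanLengthLE K F n) :
    ∀ l : List E, l ≠ [] → F l ∈ spanLengthLE K F n
  | [], h => absurd rfl h
  | [x], _ => hsucc [x] (List.cons_ne_nil _ _) (by simp)
  | x :: y :: l, _ =>
    map_funLeft_spanLengthLE_le hshift hsucc x
      ⟨F (y :: l), mem_spanLengthLE_of_shift hshift hsucc (y :: l) (List.cons_ne_nil _ _),
        (hshift [x] (y :: l) (List.cons_ne_nil _ _)).symm⟩

end Shift

section Recurrence

variable {K κ V : Type*} [Field K] [AddCommGroup V] [Module K V] {F : List (κ → K) → V}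

theorem finiteDimensional_spanLengthLE [Fintype κ] (hF : MultilinearInEntries K F) (n : ℕ) :
    FiniteDimensional K (spanLengthLE K F n) := by
  have := fun k : Fin (n + 1) => (ofFnMultilinearMap hF k).finiteDimensional_span_range
  refine Submodule.finiteDimensional_of_le
    (S₂ := ⨆ k : Fin (n + 1), Submodule.span K (Set.range (ofFnMultilinearMap hF k)))
    (Submodule.span_le.2 ?_)
  rintro _ ⟨l, -, hl, rfl⟩
  refine Submodule.mem_iSup_of_mem ⟨l.length, Nat.lt_succ_of_le hl⟩
    (Submodule.subset_span ⟨l.get, ?_⟩)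
  exact congrArg F l.ofFn_get

/-- `∑ⱼ Qⱼ(p) F(p₁⋯p_{n+1-j}) = 0` for all `p`. -/
def SatisfiesRecurrence {n : ℕ} (F : List (κ → K) → V)
    (Qp : Fin (n + 1) → MvPolynomial (Fin (n + 1) × κ) K) : Prop :=
  ∀ p : Fin (n + 1) → κ → K,
    ∑ j : Fin (n + 1), eval (fun iq => p iq.1 iq.2) (Qp j) •
      F (List.ofFn fun i : Fin (n + 1 - (j : ℕ)) => p (Fin.castLE (Nat.sub_le (n + 1) j) i)) = 0

theorem mem_spanLengthLE_of_eval_ne_zero {n : ℕ}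
    {Qp : Fin (n + 1) → MvPolynomial (Fin (n + 1) × κ) K}
    (hann : SatisfiesRecurrence F Qp) (p : Fin (n + 1) → κ → K) (hp : eval (fun iq => p iq.1 iq.2) (Qp 0) ≠ 0) :
    F (List.ofFn p) ∈ spanLengthLE K F n := by
  set W := spanLengthLE K F n
  have hshort (j : Fin n) : F (List.ofFn fun i : Fin (n + 1 - (j.succ : ℕ)) =>
      p (Fin.castLE (Nat.sub_le (n + 1) (j.succ : ℕ)) i)) ∈ W :=
    Submodule.subset_span ⟨_, by simp; omega, by simp, rfl⟩
  have hfirst : (List.ofFn fun i : Fin (n + 1 - ((0 : Fin (n + 1)) : ℕ)) =>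
      p (Fin.castLE (Nat.sub_le (n + 1) _) i)) = List.ofFn p :=
    List.ext_getElem (by simp) fun i _ _ => by simp
  have h := hann p
  rw [Fin.sum_univ_succ, hfirst, add_eq_zero_iff_eq_neg] at h
  rw [← W.smul_mem_iff hp, h]
  exact W.neg_mem (W.sum_mem fun j _ => W.smul_mem _ (hshort j))

theorem mem_spanLengthLE_of_length_le_succ [Infinite K] [Fintype κ]
    (hF : MultilinearInEntries K F) {n : ℕ} (Qp : Fin (n + 1) → MvPolynomial (Fin (n + 1) × κ) K) (hQ0 : Qp 0 ≠ 0)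
    (hann : SatisfiesRecurrence F Qp) (l : List (κ → K)) (hl : l ≠ []) (hlen : l.length ≤ n + 1) :
    F l ∈ spanLengthLE K F n := by
  set W := spanLengthLE K F n
  rcases hlen.lt_or_eq with hlt | hlen
  · exact Submodule.subset_span ⟨l, hl, Nat.le_of_lt_succ hlt, rfl⟩
  have hM : W.mkQ.compMultilinearMap (ofFnMultilinearMap hF (n + 1)) = 0 :=
    MultilinearMap.eq_zero_of_eval_ne_zero _ hQ0 fun p hp =>
      (Submodule.Quotient.mk_eq_zero W).2 (mem_spanLengthLE_of_eval_ne_zero hann p hp)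
  rw [← List.ofFn_get l, List.ofFn_congr hlen]
  exact (Submodule.Quotient.mk_eq_zero W).1 (MultilinearMap.congr_fun hM _)

end Recurrence

/-- Suppose the functions `f^{p̄} = F p̄` on a set `X` (for nonempty finite sequences `p̄`
of vectors in `ℝ^Q`) satisfy the shift property `F (a ++ b) w = F b (σ a w)`, are
multilinear in the entries of `p̄`, and satisfy a polynomial recurrence
`∑_{j=0}^n Q_j(p_1,…,p_{n+1}) f^{p_1⋯p_{n+1-j}} = 0` with `Q_0 ≠ 0`. Then
`span{f^{p̄}} = span{f^{p̄} : |p̄| ≤ n}`, which is finite-dimensional. -/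
theorem stmt19 {Qn n : ℕ} {X : Type*}
    (σ : List (Fin Qn → ℝ) → X → X)
    (F : List (Fin Qn → ℝ) → (X → ℝ))
    (hshift : ∀ (a b : List (Fin Qn → ℝ)), b ≠ [] →
      F (a ++ b) = fun w => F b (σ a w))
    (hmul : ∀ (l1 l2 : List (Fin Qn → ℝ)) (c : ℝ) (p p' : Fin Qn → ℝ),
      F (l1 ++ (c • p + p') :: l2) = c • F (l1 ++ p :: l2) + F (l1 ++ p' :: l2))
    (Qp : Fin (n+1) → MvPolynomial (Fin (n+1) × Fin Qn) ℝ)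
    (hQ0 : Qp 0 ≠ 0)
    (hann : ∀ p : Fin (n+1) → (Fin Qn → ℝ),
      ∑ j : Fin (n+1),
        MvPolynomial.eval (fun iq => p iq.1 iq.2) (Qp j) •
          F (List.ofFn fun i : Fin (n + 1 - (j : ℕ)) =>
            p (Fin.castLE (Nat.sub_le (n+1) (j : ℕ)) i)) = 0) :
    Submodule.span ℝ {g : X → ℝ | ∃ pb : List (Fin Qn → ℝ), pb ≠ [] ∧ g = F pb} =
      Submodule.span ℝ
        {g : X → ℝ | ∃ pb : List (Fin Qn → ℝ), pb ≠ [] ∧ pb.length ≤ n ∧ g = F pb} ∧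
    FiniteDimensional ℝ
      ↥(Submodule.span ℝ {g : X → ℝ | ∃ pb : List (Fin Qn → ℝ), pb ≠ [] ∧ g = F pb}) := by
  have hall := mem_spanLengthLE_of_shift hshift
    (mem_spanLengthLE_of_length_le_succ hmul Qp hQ0 hann)
  have heq : Submodule.span ℝ {g : X → ℝ | ∃ pb : List (Fin Qn → ℝ), pb ≠ [] ∧ g = F pb} =
      spanLengthLE ℝ F n := by
    refine le_antisymm (Submodule.span_le.2 ?_) (Submodule.span_mono ?_)
    · rintro _ ⟨l, hl, rfl⟩
      exact hall l hl
    · rintro _ ⟨l, hl, -, rfl⟩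
      exact ⟨l, hl, rfl⟩
  exact ⟨heq, heq ▸ finiteDimensional_spanLengthLE hmul n⟩
end
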